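/- arXiv:2211.02964 — 2 statements merged into one kernel-verified Lean document; each statement's English description precedes it below -/
import Mathlib

section
/- Let z and z' be independent p-dimensional random vectors whose components are independent with mean 0, variance 1 and fourth moments bounded by ν4 < ∞, let Σ be a p×p positive semidefinite matrix, and set ε = Σ^{1/2} z and ε' = Σ^{1/2} z'. Then there exists a constant C depending only on ν4 (and not on p or Σ) such that E{(εᵀ ε')⁴} ≤ C tr²(Σ²). -/
/-! For fixed `z'`, the form `εᵀε' = ∑ᵢ (Σz')ᵢ zᵢ` is a linear form in the independent standardized
coordinates of `z`, and such forms satisfy `E(∑ aᵢzᵢ)⁴ ≤ K (∑ aᵢ²)²` with `K = max ν₄ 3`: expanding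
`(X + Y)⁴` for independent centred `X`, `Y` leaves `EX⁴ + 6 EX² EY² + EY⁴`, which allows an
induction on the number of terms. Integrating over `z'` (Tonelli for the product law) gives
`E(εᵀε')⁴ ≤ K E(∑ₖ Vₖ²)²` with `Vₖ = (Σz')ₖ`, again a linear form, so `EVₖ⁴ ≤ K cₖ²` with
`cₖ = ∑ᵢ Σₖᵢ²`. Cauchy–Schwarz on the cross terms `E Vₖ² Vₗ²` then gives
`E(∑ₖ Vₖ²)² ≤ K (∑ₖ cₖ)² = K tr²(Σ²)`, hence `C = K²`. -/

open MeasureTheory ProbabilityTheory Filter Finset Real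

noncomputable section
open scoped Classical

/-- Euclidean inner product of two `p`-vectors. -/
def dotp {p : ℕ} (x y : Fin p → ℝ) : ℝ := ∑ i, x i * y i

/-- Sample autocovariance at lag `k`, based on observations at times `1,…,n`:
`Σ̂(k)_{ij} = n⁻¹ ∑_{t=1}^{n-k} x_{t+k,i} x_{t,j}`. -/
def sCov (n : ℕ) {p : ℕ} (x : ℕ → Fin p → ℝ) (k : ℕ) (i j : Fin p) : ℝ :=
  (∑ t ∈ Finset.Icc 1 (n - k), x (t + k) i * x t j) / n

/-- Sample autocorrelation at lag `k`:  `ρ̂_{ij}(k)`. -/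
def sCorr (n : ℕ) {p : ℕ} (x : ℕ → Fin p → ℝ) (k : ℕ) (i j : Fin p) : ℝ :=
  sCov n x k i j / Real.sqrt (sCov n x 0 i i * sCov n x 0 j j)

/-- The max-type statistic `T_MAX = max_{1≤k≤K} max_{i,j} √n |ρ̂_{ij}(k)|`. -/
def tMax (n K : ℕ) {p : ℕ} (x : ℕ → Fin p → ℝ) : ℝ :=
  ⨆ k : Fin K, ⨆ i : Fin p, ⨆ j : Fin p, Real.sqrt n * |sCorr n x (k.1 + 1) i j|

/-- The sum-type statistic `T_SUM`. -/
def tSum (n K : ℕ) {p : ℕ} (x : ℕ → Fin p → ℝ) : ℝ :=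
  (∑ l ∈ Finset.Icc 1 K, ∑ t ∈ Finset.Icc 1 (n - l), ∑ s ∈ Finset.Icc 1 (n - l),
      if t = s then 0 else dotp (x t) (x s) * dotp (x (t + l)) (x (s + l)))
    / ((n : ℝ) * ((n : ℝ) - 1))

/-- The estimator `hat-tr(Σ²)` of `tr(Σ²)`. -/
def hatTr (n : ℕ) {p : ℕ} (x : ℕ → Fin p → ℝ) : ℝ :=
  (∑ t ∈ Finset.Icc 1 n, ∑ s ∈ Finset.Icc 1 n,
      if t = s then 0 else (dotp (x t) (x s)) ^ 2) / ((n : ℝ) * ((n : ℝ) - 1))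

/-- The estimated normalization `σ̂_S = √(2K/(n(n-1))) ⋅ hat-tr(Σ²)`. -/
def hatSigmaS (n K : ℕ) {p : ℕ} (x : ℕ → Fin p → ℝ) : ℝ :=
  Real.sqrt (2 * K / ((n : ℝ) * ((n : ℝ) - 1))) * hatTr n x

/-- The Gumbel-type limit `G(y) = exp(−π^{−1/2} e^{−y/2})`. -/
def gumbelG (y : ℝ) : ℝ := Real.exp (-(Real.exp (-y / 2)) / Real.sqrt Real.pi)

/-- The standard normal CDF `Φ`. -/
def stdNormCDF (y : ℝ) : ℝ := ((gaussianReal 0 1) (Set.Iic y)).toReal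

/-- Largest eigenvalue of a symmetric matrix, as the sup of its quadratic form
over the unit sphere. -/
def lamMax {p : ℕ} (S : Matrix (Fin p) (Fin p) ℝ) : ℝ :=
  ⨆ v : {v : Fin p → ℝ // ∑ i, (v i) ^ 2 = 1}, ∑ i, ∑ j, v.1 i * S i j * v.1 j

/-- Smallest eigenvalue of a symmetric matrix. -/
def lamMin {p : ℕ} (S : Matrix (Fin p) (Fin p) ℝ) : ℝ :=
  ⨅ v : {v : Fin p → ℝ // ∑ i, (v i) ^ 2 = 1}, ∑ i, ∑ j, v.1 i * S i j * v.1 j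

/-- `M_p = max_{1≤i≤p} ∑_{j≠i} σ_{ij}²`. -/
def offDiagMax {p : ℕ} (S : Matrix (Fin p) (Fin p) ℝ) : ℝ :=
  ⨆ i : Fin p, ∑ j ∈ Finset.univ.erase i, (S i j) ^ 2

/-- Population correlation `ρ_{ij} = σ_{ij}/(σ_i σ_j)`. -/
def corrOf {p : ℕ} (S : Matrix (Fin p) (Fin p) ℝ) (i j : Fin p) : ℝ :=
  S i j / Real.sqrt (S i i * S j j)

/-- The set `C_p` of Condition (C3): pairs `(i,j)` such that the number of pairs `(s,l)`
with `|ρ_{ij} ρ_{sl}| ≥ δ` is at least `p^κ`. -/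
def strongSet {p : ℕ} (S : Matrix (Fin p) (Fin p) ℝ) (δ κ : ℝ) : Finset (Fin p × Fin p) :=
  Finset.univ.filter (fun ij =>
    (p : ℝ) ^ κ ≤ ((Finset.univ.filter (fun sl : Fin p × Fin p =>
      δ ≤ |corrOf S ij.1 ij.2 * corrOf S sl.1 sl.2|)).card : ℝ))

section Moments

variable {Ω : Type*} [MeasurableSpace Ω] {μ : Measure Ω}

theorem memLp_four_iff_integrable_pow_four {X : Ω → ℝ} (hX : AEStronglyMeasurable X μ) :
    MemLp X 4 μ ↔ Integrable (fun ω => X ω ^ 4) μ := by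
  rw [← integrable_norm_rpow_iff hX (by norm_num) (by norm_num)]
  congr! 2 with ω
  rw [show ((4 : ENNReal)).toReal = ((4 : ℕ) : ℝ) by norm_num, Real.rpow_natCast, Real.norm_eq_abs,
    pow_abs, abs_of_nonneg (by positivity)]

theorem integral_mul_le_sqrt_mul_sqrt {f g : Ω → ℝ} (hf0 : 0 ≤ᵐ[μ] f) (hg0 : 0 ≤ᵐ[μ] g)
    (hf : MemLp f 2 μ) (hg : MemLp g 2 μ) :
    ∫ ω, f ω * g ω ∂μ ≤ √(∫ ω, f ω ^ 2 ∂μ) * √(∫ ω, g ω ^ 2 ∂μ) := by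
  have h := integral_mul_le_Lp_mul_Lq_of_nonneg Real.HolderConjugate.two_two hf0 hg0
    (by simpa using hf) (by simpa using hg)
  simpa only [Real.sqrt_eq_rpow, ← Real.rpow_natCast, Nat.cast_ofNat, one_div] using h

variable [IsFiniteMeasure μ]

theorem MeasureTheory.MemLp.integrable_pow_of_le {X : Ω → ℝ} {n k : ℕ}
    (hX : MemLp X n μ) (hk : k ≤ n) : Integrable (fun ω => X ω ^ k) μ := by
  have := (hX.mono_exponent (p := k) (by exact_mod_cast hk)).integrable_norm_pow'
  refine (integrable_norm_iff (f := fun ω => X ω ^ k) (hX.1.pow k)).1 ?_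
  simpa only [norm_pow] using this

theorem MeasureTheory.MemLp.sq_memLp_two {X : Ω → ℝ} (hX : MemLp X 4 μ) :
    MemLp (fun ω => X ω ^ 2) 2 μ := by
  refine (memLp_two_iff_integrable_sq (f := fun ω => X ω ^ 2) (hX.1.pow 2)).2 ?_
  simpa only [← pow_mul] using hX.integrable_pow_of_le (k := 4) (n := 4) le_rfl

theorem integral_sq_sum_sq_le {ι : Type*} (s : Finset ι) {V : ι → Ω → ℝ}
    (hV : ∀ k, MemLp (V k) 4 μ) {K : ℝ} (hK : 0 ≤ K) {c : ι → ℝ} (hc : ∀ k, 0 ≤ c k)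
    (hVc : ∀ k, ∫ ω, V k ω ^ 4 ∂μ ≤ K * c k ^ 2) :
    ∫ ω, (∑ k ∈ s, V k ω ^ 2) ^ 2 ∂μ ≤ K * (∑ k ∈ s, c k) ^ 2 := by
  have hsqrt : ∀ k, √(∫ ω, (V k ω ^ 2) ^ 2 ∂μ) ≤ √K * c k := fun k => by
    simp_rw [← pow_mul]
    simpa [Real.sqrt_mul hK, Real.sqrt_sq (hc k)] using Real.sqrt_le_sqrt (hVc k)
  have hpair : ∀ k l, ∫ ω, V k ω ^ 2 * V l ω ^ 2 ∂μ ≤ K * (c k * c l) := fun k l =>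
    calc ∫ ω, V k ω ^ 2 * V l ω ^ 2 ∂μ
        ≤ √(∫ ω, (V k ω ^ 2) ^ 2 ∂μ) * √(∫ ω, (V l ω ^ 2) ^ 2 ∂μ) :=
          integral_mul_le_sqrt_mul_sqrt (ae_of_all _ fun ω => sq_nonneg _)
            (ae_of_all _ fun ω => sq_nonneg _) (hV k).sq_memLp_two (hV l).sq_memLp_two
      _ ≤ (√K * c k) * (√K * c l) :=
          mul_le_mul (hsqrt k) (hsqrt l) (Real.sqrt_nonneg _)
            (mul_nonneg (Real.sqrt_nonneg K) (hc k))
      _ = K * (c k * c l) := by rw [mul_mul_mul_comm, Real.mul_self_sqrt hK]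
  have hint : ∀ k l, Integrable (fun ω => V k ω ^ 2 * V l ω ^ 2) μ := fun k l =>
    (hV k).sq_memLp_two.integrable_mul (hV l).sq_memLp_two
  simp_rw [sq (∑ k ∈ s, _), sum_mul_sum]
  rw [integral_finsetSum _ fun k _ => integrable_finsetSum _ fun l _ => hint k l, mul_sum]
  refine sum_le_sum fun k _ => ?_
  rw [integral_finsetSum _ fun l _ => hint k l, mul_sum]
  exact sum_le_sum fun l _ => hpair k l

end Moments

section IndependentSums

variable {Ω : Type*} [MeasurableSpace Ω] {μ : Measure Ω} {X Y : Ω → ℝ}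

theorem ProbabilityTheory.IndepFun.integral_add_pow [IsFiniteMeasure μ] (hXY : IndepFun X Y μ)
    {n : ℕ} (hX : MemLp X n μ) (hY : MemLp Y n μ) :
    ∫ ω, (X ω + Y ω) ^ n ∂μ =
      ∑ m ∈ range (n + 1), (∫ ω, X ω ^ m ∂μ) * (∫ ω, Y ω ^ (n - m) ∂μ) * n.choose m := by
  have hpow : ∀ m ∈ range (n + 1),
      IndepFun (fun ω => X ω ^ m) (fun ω => Y ω ^ (n - m)) μ := fun m _ =>
    hXY.comp (φ := fun x => x ^ m) (ψ := fun y => y ^ (n - m)) (by fun_prop) (by fun_prop)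
  simp only [add_pow]
  rw [integral_finsetSum]
  · refine sum_congr rfl fun m hm => ?_
    rw [integral_mul_const, (hpow m hm).integral_fun_mul_eq_mul_integral (hX.1.pow m) (hY.1.pow _)]
  · intro m hm
    refine Integrable.mul_const ((hpow m hm).integrable_mul ?_ ?_) _
    · exact hX.integrable_pow_of_le (by simpa [Nat.lt_succ_iff] using hm)
    · exact hY.integrable_pow_of_le (Nat.sub_le n m)

variable [IsProbabilityMeasure μ]

theorem ProbabilityTheory.IndepFun.integral_add_sq (hXY : IndepFun X Y μ) (hX : MemLp X 2 μ)
    (hY : MemLp Y 2 μ) (hX0 : ∫ ω, X ω ∂μ = 0) :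
    ∫ ω, (X ω + Y ω) ^ 2 ∂μ = ∫ ω, X ω ^ 2 ∂μ + ∫ ω, Y ω ^ 2 ∂μ := by
  rw [hXY.integral_add_pow hX hY]
  simp [sum_range_succ, hX0, add_comm]

theorem ProbabilityTheory.IndepFun.integral_add_pow_four (hXY : IndepFun X Y μ)
    (hX : MemLp X 4 μ) (hY : MemLp Y 4 μ) (hX0 : ∫ ω, X ω ∂μ = 0) (hY0 : ∫ ω, Y ω ∂μ = 0) :
    ∫ ω, (X ω + Y ω) ^ 4 ∂μ =
      ∫ ω, X ω ^ 4 ∂μ + 6 * (∫ ω, X ω ^ 2 ∂μ) * (∫ ω, Y ω ^ 2 ∂μ) + ∫ ω, Y ω ^ 4 ∂μ := by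
  rw [hXY.integral_add_pow hX hY]
  simp [sum_range_succ, hX0, hY0, Nat.choose]
  ring

end IndependentSums

section LinearForms

variable {Ω ι : Type*} [MeasurableSpace Ω] {μ : Measure Ω} {w : ι → Ω → ℝ}

theorem ProbabilityTheory.iIndepFun.indepFun_mul_sum_mul_of_notMem (hind : iIndepFun w μ)
    (hw : ∀ i, AEMeasurable (w i) μ) (a : ι → ℝ) {s : Finset ι} {j : ι} (hj : j ∉ s) :
    IndepFun (fun ω => a j * w j ω) (fun ω => ∑ i ∈ s, a i * w i ω) μ := by
  have hind' : iIndepFun (fun i ω => a i * w i ω) μ :=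
    hind.comp₀ (fun i x => a i * x) hw fun i => by fun_prop
  have := (hind'.indepFun_finsetSum_of_notMem₀ (fun i => (hw i).const_mul (a i)) hj).symm
  simpa only [Finset.sum_fn] using this

theorem integral_sum_mul_eq_zero (hw : ∀ i, Integrable (w i) μ) (h0 : ∀ i, ∫ ω, w i ω ∂μ = 0)
    (a : ι → ℝ) (s : Finset ι) : ∫ ω, ∑ i ∈ s, a i * w i ω ∂μ = 0 := by
  rw [integral_finsetSum _ fun i _ => (hw i).const_mul (a i)]
  simp [integral_const_mul, h0]

theorem integral_sum_mul_sq [IsProbabilityMeasure μ] (hind : iIndepFun w μ)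
    (hw : ∀ i, MemLp (w i) 2 μ) (h0 : ∀ i, ∫ ω, w i ω ∂μ = 0) (h2 : ∀ i, ∫ ω, w i ω ^ 2 ∂μ = 1)
    (a : ι → ℝ) (s : Finset ι) : ∫ ω, (∑ i ∈ s, a i * w i ω) ^ 2 ∂μ = ∑ i ∈ s, a i ^ 2 := by
  induction s using Finset.induction_on with
  | empty => simp
  | @insert j s hj ih =>
    have hindep := hind.indepFun_mul_sum_mul_of_notMem (fun i => (hw i).1.aemeasurable) a hj
    simp only [sum_insert hj]
    rw [hindep.integral_add_sq ((hw j).const_mul (a j))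
      (memLp_finsetSum s fun i _ => (hw i).const_mul (a i)) (by simp [integral_const_mul, h0]), ih]
    simp [mul_pow, integral_const_mul, h2]

structure IsIndepStandardized (w : ι → Ω → ℝ) (K : ℝ) (μ : Measure Ω) : Prop where
  indep : iIndepFun w μ
  memLp : ∀ i, MemLp (w i) 4 μ
  integral_eq_zero : ∀ i, ∫ ω, w i ω ∂μ = 0
  integral_sq : ∀ i, ∫ ω, w i ω ^ 2 ∂μ = 1
  integral_pow_four_le : ∀ i, ∫ ω, w i ω ^ 4 ∂μ ≤ K

namespace IsIndepStandardized

variable {K : ℝ} (hw : IsIndepStandardized w K μ)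
include hw

theorem memLp_sum_mul (a : ι → ℝ) (s : Finset ι) :
    MemLp (fun ω => ∑ i ∈ s, a i * w i ω) 4 μ :=
  memLp_finsetSum s fun i _ => (hw.memLp i).const_mul (a i)

theorem integral_sum_mul_pow_four_le [IsProbabilityMeasure μ] (hK : 3 ≤ K) (a : ι → ℝ)
    (s : Finset ι) : ∫ ω, (∑ i ∈ s, a i * w i ω) ^ 4 ∂μ ≤ K * (∑ i ∈ s, a i ^ 2) ^ 2 := by
  induction s using Finset.induction_on with
  | empty => simp
  | @insert j s hj ih =>
    have hindep := hw.indep.indepFun_mul_sum_mul_of_notMem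
      (fun i => (hw.memLp i).1.aemeasurable) a hj
    have hsq := integral_sum_mul_sq hw.indep (fun i => (hw.memLp i).mono_exponent (by norm_num))
      hw.integral_eq_zero hw.integral_sq a s
    have hmean := integral_sum_mul_eq_zero (fun i => (hw.memLp i).integrable (by norm_num))
      hw.integral_eq_zero a s
    simp only [sum_insert hj]
    rw [hindep.integral_add_pow_four ((hw.memLp j).const_mul (a j)) (hw.memLp_sum_mul a s)
      (by simp [integral_const_mul, hw.integral_eq_zero]) hmean, hsq]
    simp only [mul_pow, integral_const_mul, hw.integral_sq, mul_one]
    have hA : 0 ≤ ∑ i ∈ s, a i ^ 2 := sum_nonneg fun i _ => sq_nonneg (a i)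
    have hwj := mul_le_mul_of_nonneg_left (hw.integral_pow_four_le j)
      (pow_nonneg (sq_nonneg (a j)) 2)
    -- the cross term `6 a_j² ∑ a_i²` is absorbed since `6 ≤ 2 K`
    nlinarith [mul_nonneg hA (sq_nonneg (a j))]

end IsIndepStandardized

end LinearForms

section Independence

theorem ProbabilityTheory.IndepFun.integral_le_of_forall_integral_le {Ω α β : Type*}
    [MeasurableSpace Ω] [MeasurableSpace α] [MeasurableSpace β] {μ : Measure Ω}
    [IsFiniteMeasure μ] {X : Ω → α} {Y : Ω → β} (hXY : IndepFun X Y μ) (hX : Measurable X)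
    (hY : Measurable Y) {f : α → β → ℝ} (hf : Measurable (Function.uncurry f))
    (hf0 : ∀ x y, 0 ≤ f x y) (hfX : ∀ y, Integrable (fun ω => f (X ω) y) μ) {g : β → ℝ}
    (hg : Measurable g) (hgY : Integrable (fun ω => g (Y ω)) μ)
    (hfg : ∀ y, ∫ ω, f (X ω) y ∂μ ≤ g y) :
    ∫ ω, f (X ω) (Y ω) ∂μ ≤ ∫ ω, g (Y ω) ∂μ := by
  have hg0 : ∀ y, 0 ≤ g y := fun y => (integral_nonneg fun ω => hf0 _ y).trans (hfg y)
  have hF : Measurable fun p : α × β => ENNReal.ofReal (f p.1 p.2) := hf.ennreal_ofReal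
  have hlin : ∫⁻ ω, ENNReal.ofReal (f (X ω) (Y ω)) ∂μ ≤ ENNReal.ofReal (∫ ω, g (Y ω) ∂μ) := by
    calc ∫⁻ ω, ENNReal.ofReal (f (X ω) (Y ω)) ∂μ
        = ∫⁻ p, ENNReal.ofReal (f p.1 p.2) ∂((μ.map X).prod (μ.map Y)) := by
          rw [← hXY.map_prod_eq_prod_map_map hX.aemeasurable hY.aemeasurable,
            lintegral_map hF (hX.prodMk hY)]
      _ = ∫⁻ y, ∫⁻ ω, ENNReal.ofReal (f (X ω) y) ∂μ ∂(μ.map Y) := by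
          rw [lintegral_prod_symm' _ hF]
          exact lintegral_congr fun y =>
            lintegral_map (hF.comp (measurable_id.prodMk measurable_const)) hX
      _ ≤ ∫⁻ y, ENNReal.ofReal (g y) ∂(μ.map Y) := by
          refine lintegral_mono fun y => ?_
          rw [← ofReal_integral_eq_lintegral_ofReal (hfX y) (ae_of_all _ fun ω => hf0 _ y)]
          exact ENNReal.ofReal_le_ofReal (hfg y)
      _ = ENNReal.ofReal (∫ ω, g (Y ω) ∂μ) := by
          rw [lintegral_map hg.ennreal_ofReal hY,
            ofReal_integral_eq_lintegral_ofReal hgY (ae_of_all _ fun ω => hg0 _)]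
  rw [integral_eq_lintegral_of_nonneg_ae (ae_of_all _ fun ω => hf0 _ _)
    (hf.comp (hX.prodMk hY)).aestronglyMeasurable]
  exact ENNReal.toReal_le_of_le_ofReal (integral_nonneg fun ω => hg0 _) hlin

theorem ProbabilityTheory.iIndepFun.indepFun_true_false {Ω ι β : Type*} [MeasurableSpace Ω]
    [MeasurableSpace β] {μ : Measure Ω} [Fintype ι] {f : Bool × ι → Ω → β}
    (hf : iIndepFun f μ) (hmeas : ∀ bi, Measurable (f bi)) :
    IndepFun (fun ω i => f (true, i) ω) (fun ω i => f (false, i) ω) μ := by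
  have hST : Disjoint (univ.filter fun bi : Bool × ι => bi.1 = true)
      (univ.filter fun bi => bi.1 = false) :=
    disjoint_filter.2 fun bi _ h => by simp [h]
  exact (hf.indepFun_finset _ _ hST hmeas).comp
    (φ := fun v i => v ⟨(true, i), by simp⟩) (ψ := fun v i => v ⟨(false, i), by simp⟩)
    (measurable_pi_lambda _ fun i => measurable_pi_apply _)
    (measurable_pi_lambda _ fun i => measurable_pi_apply _)

end Independence

namespace Matrix

variable {n : Type*} [Fintype n]

theorem dotProduct_mulVec_mulVec_self (R : Matrix n n ℝ) (x y : n → ℝ) :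
    (R *ᵥ x) ⬝ᵥ (R *ᵥ y) = ∑ i, ((Rᵀ * R) *ᵥ y) i * x i := by
  rw [dotProduct_comm, dotProduct_mulVec, ← mulVec_transpose, mulVec_mulVec]
  rfl

theorem trace_mul_transpose_self (S : Matrix n n ℝ) : (S * Sᵀ).trace = ∑ k, ∑ i, S k i ^ 2 := by
  simp [trace, mul_apply, sq]

end Matrix

section RandomVectors

open Matrix

variable {Ω ι : Type*} [MeasurableSpace Ω] {μ : Measure Ω} [IsProbabilityMeasure μ] [Fintype ι]
  {K : ℝ} {z : Ω → ι → ℝ} (hz : IsIndepStandardized (fun i ω => z ω i) K μ) (hK : 3 ≤ K)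
include hz hK

theorem integral_sum_mul_pow_four_le_of_indepFun (hzm : Measurable z) {Y : Ω → ι → ℝ}
    (hY : Measurable Y) (hYL : ∀ k, MemLp (fun ω => Y ω k) 4 μ) (hzY : IndepFun z Y μ) :
    ∫ ω, (∑ i, Y ω i * z ω i) ^ 4 ∂μ ≤ K * ∫ ω, (∑ k, Y ω k ^ 2) ^ 2 ∂μ := by
  rw [← integral_const_mul]
  exact hzY.integral_le_of_forall_integral_le (f := fun x y => (∑ i, y i * x i) ^ 4)
    (g := fun y => K * (∑ k, y k ^ 2) ^ 2) hzm hY (by fun_prop) (fun _ _ => by positivity)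
    (fun y => (hz.memLp_sum_mul y univ).integrable_pow_of_le le_rfl) (by fun_prop)
    ((memLp_finsetSum univ fun k _ => (hYL k).sq_memLp_two).integrable_sq.const_mul K)
    (fun y => hz.integral_sum_mul_pow_four_le hK y univ)

theorem integral_sq_sum_mulVec_sq_le (S : Matrix ι ι ℝ) :
    ∫ ω, (∑ k, (S *ᵥ z ω) k ^ 2) ^ 2 ∂μ ≤ K * (∑ k, ∑ i, S k i ^ 2) ^ 2 :=
  integral_sq_sum_sq_le univ (fun k => hz.memLp_sum_mul (S k) univ) (by linarith)
    (fun k => sum_nonneg fun i _ => sq_nonneg _)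
    (fun k => hz.integral_sum_mul_pow_four_le hK (S k) univ)

theorem integral_sum_mulVec_mul_pow_four_le {z' : Ω → ι → ℝ}
    (hz' : IsIndepStandardized (fun i ω => z' ω i) K μ) (hzm : Measurable z)
    (hz'm : Measurable z') (hzz' : IndepFun z z' μ) (S : Matrix ι ι ℝ) :
    ∫ ω, (∑ i, (S *ᵥ z' ω) i * z ω i) ^ 4 ∂μ ≤ K ^ 2 * (∑ k, ∑ i, S k i ^ 2) ^ 2 :=
  calc ∫ ω, (∑ i, (S *ᵥ z' ω) i * z ω i) ^ 4 ∂μ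
      ≤ K * ∫ ω, (∑ k, (S *ᵥ z' ω) k ^ 2) ^ 2 ∂μ :=
        integral_sum_mul_pow_four_le_of_indepFun hz hK hzm (by fun_prop)
          (fun k => hz'.memLp_sum_mul (S k) univ)
          (hzz'.comp (ψ := (S *ᵥ ·)) measurable_id (by fun_prop))
    _ ≤ K * (K * (∑ k, ∑ i, S k i ^ 2) ^ 2) := by
        gcongr
        exact integral_sq_sum_mulVec_sq_le hz' hK S
    _ = K ^ 2 * (∑ k, ∑ i, S k i ^ 2) ^ 2 := by ring

end RandomVectors

/-- fourth-moment bound for the bilinear form.  If `ε = Σ^{1/2} z` and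
`ε' = Σ^{1/2} z'` with `z, z'` independent vectors having jointly independent
standardized components whose fourth moments are bounded by `ν4`, then
`E{(εᵀε')⁴} ≤ C tr²(Σ²)` for a constant `C = C(ν4)` not depending on `p` or `Σ`. -/
theorem bilinear_form_fourth_moment_bound (ν4 : ℝ) :
    ∃ C : ℝ,
      ∀ (p : ℕ) (Ω : Type) (_ : MeasurableSpace Ω) (P : Measure Ω),
        IsProbabilityMeasure P →
      ∀ (Sig R : Matrix (Fin p) (Fin p) ℝ) (z z' : Ω → Fin p → ℝ),
        Measurable z → Measurable z' →
        -- `R = Σ^{1/2}`: the positive semidefinite square root of `Σ`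
        R.PosSemidef → R * R = Sig →
        -- all components of `z` and `z'` are jointly independent:
        iIndepFun
          (fun (bi : Bool × Fin p) => fun ω => if bi.1 then z ω bi.2 else z' ω bi.2) P →
        -- standardized components with fourth moments bounded by `ν4`:
        (∀ i, ∫ ω, z ω i ∂P = 0) → (∀ i, ∫ ω, z' ω i ∂P = 0) →
        (∀ i, ∫ ω, (z ω i) ^ 2 ∂P = 1) → (∀ i, ∫ ω, (z' ω i) ^ 2 ∂P = 1) →
        (∀ i, Integrable (fun ω => (z ω i) ^ 4) P) →
        (∀ i, Integrable (fun ω => (z' ω i) ^ 4) P) →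
        (∀ i, ∫ ω, (z ω i) ^ 4 ∂P ≤ ν4) → (∀ i, ∫ ω, (z' ω i) ^ 4 ∂P ≤ ν4) →
        ∫ ω, (dotp (R.mulVec (z ω)) (R.mulVec (z' ω))) ^ 4 ∂P
          ≤ C * (Matrix.trace (Sig ^ 2)) ^ 2 := by
  set K := max ν4 3
  refine ⟨K ^ 2, ?_⟩
  intro p Ω _ P _ Sig R z z' hz hz' hR hRR hind hm hm' hv hv' hi4 hi4' hb hb'
  have hK : 3 ≤ K := le_max_right _ _
  have hzc : ∀ i, Measurable fun ω => z ω i := fun i => (measurable_pi_apply i).comp hz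
  have hz'c : ∀ i, Measurable fun ω => z' ω i := fun i => (measurable_pi_apply i).comp hz'
  have hzs : IsIndepStandardized (fun i ω => z ω i) K P :=
    ⟨hind.precomp (g := fun i => (true, i)) fun i j h => by simpa using h,
      fun i => (memLp_four_iff_integrable_pow_four (hzc i).aestronglyMeasurable).2 (hi4 i),
      hm, hv, fun i => (hb i).trans (le_max_left _ _)⟩
  have hz's : IsIndepStandardized (fun i ω => z' ω i) K P :=
    ⟨hind.precomp (g := fun i => (false, i)) fun i j h => by simpa using h,
      fun i => (memLp_four_iff_integrable_pow_four (hz'c i).aestronglyMeasurable).2 (hi4' i),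
      hm', hv', fun i => (hb' i).trans (le_max_left _ _)⟩
  have hzz' : IndepFun z z' P := by
    simpa using hind.indepFun_true_false (by rintro ⟨_ | _, i⟩ <;> simp [hzc, hz'c])
  have hRt : R.transpose = R := hR.1.eq
  have hbilin : ∀ ω, dotp (R.mulVec (z ω)) (R.mulVec (z' ω)) = ∑ i, Sig.mulVec (z' ω) i * z ω i :=
    fun ω => (Matrix.dotProduct_mulVec_mulVec_self R (z ω) (z' ω)).trans (by rw [hRt, hRR])
  have hSig : Sig * Sig.transpose = Sig ^ 2 := by rw [← hRR, Matrix.transpose_mul, hRt, sq]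
  simp_rw [hbilin, ← hSig, Matrix.trace_mul_transpose_self]
  exact integral_sum_mulVec_mul_pow_four_le hzs hK hz's hz hz' hzz' Sig
end
end

section
/- Let A be an n×n real symmetric matrix and ρ ∈ ℝ be such that both I_n + ρA and I_n − 2ρA are positive definite. Then 2(I_n + ρA)^{−1} − I_n = I_n − 2ρA + 2ρ² A² (I_n + ρA)^{−1}, the matrix 2ρ² A² (I_n + ρA)^{−1} is positive semidefinite, and consequently det( 2(I_n + ρA)^{−1} − I_n ) ≥ det( I_n − 2ρA ). -/
/-!
With `B = I + ρA`, both sides of the identity equal `(I - ρA) B⁻¹` after multiplying out, and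
since `A` commutes with `B⁻¹`, `A² B⁻¹ = A B⁻¹ Aᵀ` is a congruence of the positive definite `B⁻¹`.
The determinant is monotone on the positive definite cone: with `R = √M`,
`M + S = R (I + R⁻¹ S R⁻¹) R`, and `det (I + C) = ∏ (1 + λᵢ) ≥ 1` for `C ⪰ 0`.
-/

open Matrix

namespace Matrix

variable {n : Type*} [Fintype n] [DecidableEq n]

theorem PosSemidef.one_le_det_one_add {C : Matrix n n ℝ} (hC : C.PosSemidef) :
    1 ≤ (1 + C).det := by
  set U := hC.1.eigenvectorUnitary
  have hdiag : 1 + C = Unitary.conjStarAlgAut ℝ _ U (diagonal (1 + hC.1.eigenvalues)) := by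
    conv_lhs => rw [hC.1.spectral_theorem, ← map_one (Unitary.conjStarAlgAut ℝ _ U), ← map_add]
    rw [← diagonal_one, diagonal_add]
    rfl
  rw [hdiag, Unitary.conjStarAlgAut_apply, det_mul, det_mul, mul_right_comm, ← det_mul,
    Unitary.mul_star_self_of_mem U.2, det_one, one_mul, det_diagonal]
  exact Finset.one_le_prod fun i _ => le_add_of_nonneg_right (hC.eigenvalues_nonneg i)

open scoped MatrixOrder in
theorem PosDef.det_le_det_add {M S : Matrix n n ℝ} (hM : M.PosDef) (hS : S.PosSemidef) :
    M.det ≤ (M + S).det := by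
  set R := CFC.sqrt M
  have hRR : R * R = M := CFC.sqrt_mul_sqrt_self M hM.posSemidef.nonneg
  have hR : IsUnit R.det := (isUnit_iff_isUnit_det R).mp <|
    CFC.isUnit_sqrt_iff_isStrictlyPositive.mpr (isStrictlyPositive_iff_posDef.mpr hM)
  have hC : (R⁻¹ * S * R⁻¹).PosSemidef := by
    have hRinv : R⁻¹ᴴ = R⁻¹ := (CFC.sqrt_nonneg M).posSemidef.inv.isHermitian.eq
    simpa only [hRinv] using hS.mul_mul_conjTranspose_same R⁻¹
  have hsplit : M + S = R * (1 + R⁻¹ * S * R⁻¹) * R := by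
    rw [mul_add, add_mul, mul_one, hRR, ← mul_assoc, ← mul_assoc, mul_nonsing_inv _ hR, one_mul,
      mul_assoc, nonsing_inv_mul _ hR, mul_one]
  rw [hsplit, det_mul, det_mul, mul_right_comm, ← det_mul, hRR]
  exact le_mul_of_one_le_right hM.det_pos.le hC.one_le_det_one_add

theorem _root_.Commute.nonsing_inv_right {R : Type*} [CommRing R] {A B : Matrix n n R}
    (h : Commute A B) : Commute A B⁻¹ := by
  rw [nonsing_inv_eq_ringInverse]
  by_cases hB : IsUnit B
  · obtain ⟨u, rfl⟩ := hB
    rw [Ring.inverse_unit]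
    exact h.units_inv_right
  · rw [Ring.inverse_non_unit _ hB]
    exact Commute.zero_right A

open scoped ComplexOrder in
theorem IsHermitian.posSemidef_sq_mul_inv {𝕜 : Type*} [RCLike 𝕜] {A B : Matrix n n 𝕜}
    (hA : A.IsHermitian) (hB : B.PosSemidef) (hAB : Commute A B) :
    (A ^ 2 * B⁻¹).PosSemidef := by
  have hcongr := hB.inv.mul_mul_conjTranspose_same A
  rwa [hA.eq, mul_assoc, ← hAB.nonsing_inv_right.eq, ← mul_assoc, ← sq] at hcongr

theorem two_smul_inv_one_add_smul_sub_one {R : Type*} [CommRing R] (A : Matrix n n R) (ρ : R)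
    (h : IsUnit (1 + ρ • A)) :
    (2 : R) • (1 + ρ • A)⁻¹ - 1 = 1 - (2 * ρ) • A + (2 * ρ ^ 2) • (A ^ 2 * (1 + ρ • A)⁻¹) := by
  have hdet := (isUnit_iff_isUnit_det _).mp h
  rw [← h.mul_left_inj]
  simp only [sub_mul, add_mul, smul_mul_assoc, mul_assoc, nonsing_inv_mul _ hdet, one_mul, mul_one]
  simp only [mul_add, mul_one, mul_smul_comm, ← pow_two]
  module

end Matrix

/-- the matrix identity and determinant inequality used in the minimax
lower-bound argument.  If `A` is symmetric and both `I + ρA` and `I − 2ρA` are positive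
definite, then `2(I + ρA)⁻¹ − I = I − 2ρA + 2ρ²A²(I + ρA)⁻¹`, the matrix
`2ρ²A²(I + ρA)⁻¹` is positive semidefinite, and
`det(2(I + ρA)⁻¹ − I) ≥ det(I − 2ρA)`. -/
theorem two_inv_sub_one_identity_and_det_bound
    (n : ℕ) (A : Matrix (Fin n) (Fin n) ℝ) (hA : A.IsSymm) (ρ : ℝ)
    (h1 : (1 + ρ • A).PosDef) (h2 : (1 - (2 * ρ) • A).PosDef) :
    (2 : ℝ) • (1 + ρ • A)⁻¹ - 1
        = 1 - (2 * ρ) • A + (2 * ρ ^ 2) • (A ^ 2 * (1 + ρ • A)⁻¹) ∧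
    ((2 * ρ ^ 2) • (A ^ 2 * (1 + ρ • A)⁻¹)).PosSemidef ∧
    (1 - (2 * ρ) • A).det ≤ ((2 : ℝ) • (1 + ρ • A)⁻¹ - 1).det := by
  have hcomm : Commute A (1 + ρ • A) :=
    (Commute.one_right A).add_right ((Commute.refl A).smul_right ρ)
  have hidentity := two_smul_inv_one_add_smul_sub_one A ρ h1.isUnit
  have hpsd : ((2 * ρ ^ 2) • (A ^ 2 * (1 + ρ • A)⁻¹)).PosSemidef :=
    ((isHermitian_iff_isSymm.mpr hA).posSemidef_sq_mul_inv h1.posSemidef hcomm).smul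
      (by positivity)
  refine ⟨hidentity, hpsd, ?_⟩
  rw [hidentity]
  exact h2.det_le_det_add hpsd
end
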